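/- arXiv:2211.12652 — 4 statements merged into one kernel-verified Lean document; each statement's English description precedes it below -/
import Mathlib

section
/- Garman–Kohlhagen call formula: for S₀ > 0, K > 0, T > 0, σ > 0 and r_d, r_f ∈ ℝ, the discounted Gaussian integral ∫_ℝ e^{-r_d T} · max(S₀ · exp((r_d − r_f − σ²/2)T + σ√T·z) − K, 0) · (1/√(2π)) e^{-z²/2} dz equals S₀ e^{-r_f T} N(d₁) − K e^{-r_d T} N(d₂), where d₁ = (ln(S₀/K) + (r_d − r_f + σ²/2)T)/(σ√T) and d₂ = d₁ − σ√T. -/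
/-! The payoff `max (S e^{m + s z} - K) 0` vanishes exactly for `z ≤ -d₂`, so the price splits into
two Gaussian integrals over `(-d₂, ∞)`. By symmetry of the density the strike term is `K N(d₂)`.
In the spot term, completing the square turns `e^{s z} φ(z)` into `e^{s²/2} φ(z - s)`, a shifted
density, which contributes `N(d₂ + s) = N(d₁)`; the factor `e^{-r_d T} e^{m + s²/2}` is `e^{-r_f T}`. -/

noncomputable def stdNormalCdf (z : ℝ) : ℝ :=
  ∫ x in Set.Iic z, (1 / Real.sqrt (2 * Real.pi)) * Real.exp (-x ^ 2 / 2)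

open MeasureTheory Real Set

noncomputable def stdNormalPdf (z : ℝ) : ℝ := 1 / √(2 * π) * exp (-z ^ 2 / 2)

lemma stdNormalPdf_neg (z : ℝ) : stdNormalPdf (-z) = stdNormalPdf z := by
  simp [stdNormalPdf]

lemma integrable_stdNormalPdf : Integrable stdNormalPdf := by
  have h : stdNormalPdf = fun z ↦ 1 / √(2 * π) * exp (-(1 / 2) * z ^ 2) := by
    funext z; simp only [stdNormalPdf]; ring_nf
  rw [h]
  exact (integrable_exp_neg_mul_sq (by norm_num)).const_mul _

lemma integral_Ioi_stdNormalPdf (a : ℝ) : ∫ z in Ioi a, stdNormalPdf z = stdNormalCdf (-a) := by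
  have h := integral_comp_neg_Iic (-a) stdNormalPdf
  simp only [stdNormalPdf_neg, neg_neg] at h
  exact h.symm

lemma integral_Ioi_stdNormalPdf_sub (a s : ℝ) :
    ∫ z in Ioi a, stdNormalPdf (z - s) = stdNormalCdf (s - a) := by
  have hpre : (· - s) ⁻¹' Ioi (a - s) = Ioi a := by ext; simp
  rw [← hpre, (measurePreserving_sub_right volume s).setIntegral_preimage_emb
    (measurableEmbedding_subRight s), integral_Ioi_stdNormalPdf, neg_sub]

lemma exp_mul_mul_stdNormalPdf (s z : ℝ) :
    exp (s * z) * stdNormalPdf z = exp (s ^ 2 / 2) * stdNormalPdf (z - s) := by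
  have h : s * z + -z ^ 2 / 2 = s ^ 2 / 2 + -(z - s) ^ 2 / 2 := by ring
  simp only [stdNormalPdf]
  rw [mul_left_comm, ← exp_add, h, exp_add, mul_left_comm]

lemma integrable_exp_mul_mul_stdNormalPdf (s : ℝ) :
    Integrable fun z ↦ exp (s * z) * stdNormalPdf z := by
  simp_rw [exp_mul_mul_stdNormalPdf]
  exact (integrable_stdNormalPdf.comp_sub_right s).const_mul _

lemma integral_Ioi_exp_mul_mul_stdNormalPdf (a s : ℝ) :
    ∫ z in Ioi a, exp (s * z) * stdNormalPdf z = exp (s ^ 2 / 2) * stdNormalCdf (s - a) := by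
  simp_rw [exp_mul_mul_stdNormalPdf]
  rw [integral_const_mul, integral_Ioi_stdNormalPdf_sub]

lemma lt_mul_exp_add_mul_iff {S K m s : ℝ} (hS : 0 < S) (hK : 0 < K) (hs : 0 < s) (z : ℝ) :
    K < S * exp (m + s * z) ↔ -((log (S / K) + m) / s) < z := by
  rw [← log_lt_log_iff hK (by positivity), log_mul hS.ne' (exp_pos _).ne', log_exp,
    log_div hS.ne' hK.ne', neg_lt, lt_div_iff₀ hs]
  constructor <;> intro h <;> linarith

lemma integral_max_mul_exp_sub_mul_stdNormalPdf {S K m s : ℝ} (hS : 0 < S) (hK : 0 < K)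
    (hs : 0 < s) :
    ∫ z, max (S * exp (m + s * z) - K) 0 * stdNormalPdf z =
      S * exp (m + s ^ 2 / 2) * stdNormalCdf ((log (S / K) + m) / s + s) -
        K * stdNormalCdf ((log (S / K) + m) / s) := by
  set d := (log (S / K) + m) / s
  have hpayoff : (fun z ↦ max (S * exp (m + s * z) - K) 0 * stdNormalPdf z) =
      (Ioi (-d)).indicator fun z ↦
        S * exp m * (exp (s * z) * stdNormalPdf z) - K * stdNormalPdf z := by
    funext z
    by_cases hz : z ∈ Ioi (-d)
    · rw [indicator_of_mem hz, max_eq_left (sub_pos.2 ((lt_mul_exp_add_mul_iff hS hK hs z).2 hz)).le,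
        exp_add]
      ring
    · rw [indicator_of_notMem hz,
        max_eq_right (sub_nonpos.2 (not_lt.1 (mt (lt_mul_exp_add_mul_iff hS hK hs z).1 hz))), zero_mul]
  rw [hpayoff, integral_indicator measurableSet_Ioi,
    integral_sub ((integrable_exp_mul_mul_stdNormalPdf s).integrableOn.const_mul _)
      (integrable_stdNormalPdf.integrableOn.const_mul _),
    integral_const_mul, integral_const_mul, integral_Ioi_exp_mul_mul_stdNormalPdf,
    integral_Ioi_stdNormalPdf, neg_neg, sub_neg_eq_add, add_comm s, exp_add]
  ring

/-- Garman–Kohlhagen call formula. -/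
theorem garman_kohlhagen_call (S₀ K T σ rd rf : ℝ)
    (hS : 0 < S₀) (hK : 0 < K) (hT : 0 < T) (hσ : 0 < σ) :
    (∫ z : ℝ,
        Real.exp (-rd * T) *
          max (S₀ * Real.exp ((rd - rf - σ ^ 2 / 2) * T + σ * Real.sqrt T * z) - K) 0 *
          (1 / Real.sqrt (2 * Real.pi) * Real.exp (-z ^ 2 / 2))) =
      S₀ * Real.exp (-rf * T) *
          stdNormalCdf
            ((Real.log (S₀ / K) + (rd - rf + σ ^ 2 / 2) * T) / (σ * Real.sqrt T)) -
        K * Real.exp (-rd * T) *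
          stdNormalCdf
            ((Real.log (S₀ / K) + (rd - rf + σ ^ 2 / 2) * T) / (σ * Real.sqrt T) -
              σ * Real.sqrt T) := by
  have hs : 0 < σ * √T := by positivity
  have hs_sq : (σ * √T) ^ 2 = σ ^ 2 * T := by rw [mul_pow, sq_sqrt hT.le]
  have hd₂ : (log (S₀ / K) + (rd - rf - σ ^ 2 / 2) * T) / (σ * √T) =
      (log (S₀ / K) + (rd - rf + σ ^ 2 / 2) * T) / (σ * √T) - σ * √T := by
    field_simp
    linear_combination 2 * hs_sq
  have hforward : exp (-rd * T) * exp ((rd - rf - σ ^ 2 / 2) * T + (σ * √T) ^ 2 / 2) =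
      exp (-rf * T) := by
    rw [← exp_add, hs_sq]; ring_nf
  have hcall := integral_max_mul_exp_sub_mul_stdNormalPdf (m := (rd - rf - σ ^ 2 / 2) * T) hS hK hs
  simp only [stdNormalPdf, hd₂, sub_add_cancel] at hcall
  simp only [mul_assoc (exp (-rd * T)), integral_const_mul, hcall]
  rw [← hforward]
  ring
end

section
/- Garman–Kohlhagen put formula: for S₀ > 0, K > 0, T > 0, σ > 0 and r_d, r_f ∈ ℝ, the discounted Gaussian integral ∫_ℝ e^{-r_d T} · max(K − S₀ · exp((r_d − r_f − σ²/2)T + σ√T·z), 0) · (1/√(2π)) e^{-z²/2} dz equals K e^{-r_d T} N(−d₂) − S₀ e^{-r_f T} N(−d₁), where d₁ = (ln(S₀/K) + (r_d − r_f + σ²/2)T)/(σ√T) and d₂ = d₁ − σ√T. -/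
open MeasureTheory Set

lemma phi_integrable :
    Integrable (fun x : ℝ => (1 / Real.sqrt (2 * Real.pi)) * Real.exp (-x ^ 2 / 2)) := by
  have h : Integrable (fun x : ℝ => Real.exp (-(1/2 : ℝ) * x ^ 2)) :=
    integrable_exp_neg_mul_sq (by norm_num)
  have := h.const_mul (1 / Real.sqrt (2 * Real.pi))
  convert this using 2 with x
  ring_nf

lemma shift_cdf (s a : ℝ) :
    (∫ x in Set.Iic a, (1 / Real.sqrt (2 * Real.pi)) * Real.exp (-(x - s) ^ 2 / 2))
      = stdNormalCdf (a - s) := by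
  set φ : ℝ → ℝ := fun x => (1 / Real.sqrt (2 * Real.pi)) * Real.exp (-x ^ 2 / 2) with hφ
  have h1 : (∫ x in Set.Iic a, φ (x - s))
      = ∫ x, Set.indicator (Set.Iic (a - s)) φ (x - s) := by
    rw [← integral_indicator measurableSet_Iic]
    congr 1
    ext x
    simp only [Set.indicator_apply, Set.mem_Iic, sub_le_sub_iff_right]
  rw [h1, integral_sub_right_eq_self (Set.indicator (Set.Iic (a - s)) φ) s,
    integral_indicator measurableSet_Iic]
  rfl

/-- Garman–Kohlhagen put formula. -/
theorem garman_kohlhagen_put (S₀ K T σ rd rf : ℝ)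
    (hS : 0 < S₀) (hK : 0 < K) (hT : 0 < T) (hσ : 0 < σ) :
    (∫ z : ℝ,
        Real.exp (-rd * T) *
          max (K - S₀ * Real.exp ((rd - rf - σ ^ 2 / 2) * T + σ * Real.sqrt T * z)) 0 *
          (1 / Real.sqrt (2 * Real.pi) * Real.exp (-z ^ 2 / 2))) =
      K * Real.exp (-rd * T) *
          stdNormalCdf
            (-((Real.log (S₀ / K) + (rd - rf + σ ^ 2 / 2) * T) / (σ * Real.sqrt T) -
              σ * Real.sqrt T)) -
        S₀ * Real.exp (-rf * T) *
          stdNormalCdf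
            (-((Real.log (S₀ / K) + (rd - rf + σ ^ 2 / 2) * T) / (σ * Real.sqrt T))) := by
  have hsqrtT : 0 < Real.sqrt T := Real.sqrt_pos.2 hT
  set s : ℝ := σ * Real.sqrt T with hs_def
  have hs : 0 < s := mul_pos hσ hsqrtT
  have hs2 : s ^ 2 = σ ^ 2 * T := by
    rw [hs_def, mul_pow, Real.sq_sqrt hT.le]
  set m : ℝ := (rd - rf - σ ^ 2 / 2) * T with hm_def
  set φ : ℝ → ℝ := fun x => (1 / Real.sqrt (2 * Real.pi)) * Real.exp (-x ^ 2 / 2) with hφ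
  set d₁ : ℝ := (Real.log (S₀ / K) + (rd - rf + σ ^ 2 / 2) * T) / s with hd1_def
  set d₂ : ℝ := d₁ - s with hd2_def
  have hlog : Real.log (S₀ / K) = Real.log S₀ - Real.log K := Real.log_div hS.ne' hK.ne'
  have hd2s : d₂ * s = Real.log S₀ - Real.log K + m := by
    rw [hd2_def, sub_mul, hd1_def, div_mul_cancel₀ _ hs.ne', hlog, hm_def]
    have h : s * s = σ ^ 2 * T := by rw [← sq]; exact hs2
    rw [h]; ring
  -- pointwise indicator form
  have hle : ∀ z : ℝ, z ≤ -d₂ ↔ S₀ * Real.exp (m + s * z) ≤ K := by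
    intro z
    rw [← Real.exp_log hS, ← Real.exp_add, ← Real.exp_log hK, Real.exp_le_exp]
    constructor
    · intro h
      have h1 : s * z ≤ s * (-d₂) := mul_le_mul_of_nonneg_left h hs.le
      nlinarith [hd2s]
    · intro h
      have h1 : s * z ≤ s * (-d₂) := by nlinarith [hd2s]
      exact le_of_mul_le_mul_left h1 hs
  have hind : (fun z : ℝ =>
      Real.exp (-rd * T) * max (K - S₀ * Real.exp (m + s * z)) 0 * φ z)
      = Set.indicator (Set.Iic (-d₂))
        (fun z => Real.exp (-rd * T) * (K - S₀ * Real.exp (m + s * z)) * φ z) := by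
    ext z
    by_cases hz : z ≤ -d₂
    · rw [Set.indicator_of_mem (by exact hz : z ∈ Set.Iic (-d₂))]
      have := (hle z).mp hz
      rw [max_eq_left (by linarith)]
    · rw [Set.indicator_of_notMem (by exact hz : z ∉ Set.Iic (-d₂))]
      push_neg at hz
      have h1 : K < S₀ * Real.exp (m + s * z) := by
        by_contra h
        push_neg at h
        exact absurd ((hle z).mpr h) (not_le.mpr hz)
      rw [max_eq_right (by linarith)]
      ring
  -- key pointwise algebra
  have hptw : ∀ z : ℝ,
      Real.exp (-rd * T) * (K - S₀ * Real.exp (m + s * z)) * φ z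
        = (K * Real.exp (-rd * T)) * φ z
          - (S₀ * Real.exp (-rf * T)) *
              ((1 / Real.sqrt (2 * Real.pi)) * Real.exp (-(z - s) ^ 2 / 2)) := by
    intro z
    have key : Real.exp (-rd * T) * Real.exp (m + s * z) * Real.exp (-z ^ 2 / 2)
        = Real.exp (-rf * T) * Real.exp (-(z - s) ^ 2 / 2) := by
      rw [← Real.exp_add, ← Real.exp_add, ← Real.exp_add]
      congr 1
      rw [hm_def]
      linear_combination hs2 / 2
    rw [hφ]
    simp only
    linear_combination (-S₀ * (1 / Real.sqrt (2 * Real.pi))) * key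
  -- integrability
  have hφint : Integrable φ := phi_integrable
  have hφsint : Integrable (fun z : ℝ => (1 / Real.sqrt (2 * Real.pi)) * Real.exp (-(z - s) ^ 2 / 2)) :=
    hφint.comp_sub_right s
  calc
    (∫ z : ℝ, Real.exp (-rd * T) * max (K - S₀ * Real.exp (m + s * z)) 0 * φ z)
        = ∫ z in Set.Iic (-d₂),
            Real.exp (-rd * T) * (K - S₀ * Real.exp (m + s * z)) * φ z := by
          rw [hind, integral_indicator measurableSet_Iic]
    _ = ∫ z in Set.Iic (-d₂),
          ((K * Real.exp (-rd * T)) * φ z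
            - (S₀ * Real.exp (-rf * T)) *
                ((1 / Real.sqrt (2 * Real.pi)) * Real.exp (-(z - s) ^ 2 / 2))) := by
          exact setIntegral_congr_fun measurableSet_Iic (fun z _ => hptw z)
    _ = (K * Real.exp (-rd * T)) * (∫ z in Set.Iic (-d₂), φ z)
          - (S₀ * Real.exp (-rf * T)) *
              (∫ z in Set.Iic (-d₂), (1 / Real.sqrt (2 * Real.pi)) * Real.exp (-(z - s) ^ 2 / 2)) := by
          rw [integral_sub ((hφint.const_mul _).integrableOn) ((hφsint.const_mul _).integrableOn),
            ]
          simp only [integral_const_mul]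
    _ = K * Real.exp (-rd * T) * stdNormalCdf (-d₂)
          - S₀ * Real.exp (-rf * T) * stdNormalCdf (-d₂ - s) := by
          rw [shift_cdf s (-d₂)]
          rfl
    _ = _ := by
          rw [hd2_def]
          ring_nf
end

section
/- Down-and-out call price via the joint density of drifted Brownian motion and its running minimum: let S₀, K, T, σ > 0, r_d, r_f ∈ ℝ, and 0 < B < min(S₀, K). Set θ = (r_d − r_f − σ²/2)/σ, b = (1/σ)·ln(B/S₀), and for y ≤ min(0, x) set f(x,y) = −e^{θx − θ²T/2} · (2(2y − x)/(T√(2πT))) · e^{−(2y−x)²/(2T)}. Then e^{-r_d T} · ∫_{x ∈ ℝ} ∫_{y ∈ (b, min(0,x)]} max(S₀ e^{σx} − K, 0) · f(x,y) dy dx = 𝒜 − 𝒞, where 𝒜 = S₀ e^{-r_f T} N(x₁) − K e^{-r_d T} N(x₁ − σ√T) with x₁ = ln(S₀/K)/(σ√T) + (1+α)σ√T, 𝒞 = S₀ e^{-r_f T} (B/S₀)^{2(α+1)} N(y₁) − K e^{-r_d T} (B/S₀)^{2α} N(y₁ − σ√T) with y₁ = ln(B²/(S₀K))/(σ√T) +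 (1+α)σ√T, and α = (r_d − r_f − σ²/2)/σ². -/
/-!
Integrating the joint density in `y` over `(b, min 0 x]` gives the reflection-principle density
of the path killed at `b`, namely `e^{θx - θ²T/2} (φ(x) - φ(x - 2b))` with `φ` the centred
Gaussian density of variance `T`. The payoff vanishes below `k = ln(K/S₀)/σ > b`. On `(k, ∞)`,
completing the square turns the Girsanov factor times a Gaussian density into another Gaussian
density, so both terms are Black–Scholes integrals: the first is the vanilla call `𝒜`, the second
is `e^{2θb}` times the vanilla call at the reflected spot `S₀ e^{2σb} = B²/S₀`, which is `𝒞`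
since `e^{2θb} = (B/S₀)^{2α}`.
-/

open MeasureTheory ProbabilityTheory Set Real
open scoped NNReal

lemma stdNormalCdf_eq_setIntegral_gaussianPDFReal (z : ℝ) :
    stdNormalCdf z = ∫ u in Iic z, gaussianPDFReal 0 1 u := by
  simp [stdNormalCdf, gaussianPDFReal]

lemma sqrt_mul_gaussianPDFReal_sub_sqrt_mul {v : ℝ≥0} (hv : v ≠ 0) (μ u : ℝ) :
    √v * gaussianPDFReal μ v (μ - √v * u) = gaussianPDFReal 0 1 u := by
  have hv' : (0 : ℝ) < v := by positivity
  simp only [gaussianPDFReal, NNReal.coe_one, mul_one, sub_zero]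
  rw [sqrt_mul' _ hv'.le]
  have : (μ - √v * u - μ) ^ 2 = v * u ^ 2 := by
    linear_combination u ^ 2 * sq_sqrt hv'.le
  rw [this]
  field_simp

lemma setIntegral_Ioi_gaussianPDFReal {v : ℝ≥0} (hv : v ≠ 0) (μ k : ℝ) :
    ∫ x in Ioi k, gaussianPDFReal μ v x = stdNormalCdf ((μ - k) / √v) := by
  have hs : 0 < √(v : ℝ) := by positivity
  set z := (μ - k) / √v
  have himg : (fun u ↦ μ - √v * u) '' Iic z = Ici k := by
    ext x
    refine ⟨?_, fun hx ↦ ⟨(μ - x) / √v, ?_, by field_simp; ring⟩⟩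
    · rintro ⟨u, hu, rfl⟩
      have := (le_div_iff₀' hs).mp hu
      simp only [mem_Ici]; linarith
    · exact div_le_div_of_nonneg_right (by simp only [mem_Ici] at hx; linarith) hs.le
  have hderiv (u : ℝ) : HasDerivWithinAt (fun u ↦ μ - √v * u) (-√v) (Iic z) u := by
    simpa using (((hasDerivAt_id u).const_mul (√v : ℝ)).const_sub μ).hasDerivWithinAt
  have hinj : InjOn (fun u ↦ μ - √v * u) (Iic z) := fun a _ b _ h ↦ by
    simpa [hs.ne'] using h
  rw [← integral_Ici_eq_integral_Ioi, ← himg,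
    integral_image_eq_integral_abs_deriv_smul measurableSet_Iic (fun u _ ↦ hderiv u) hinj,
    stdNormalCdf_eq_setIntegral_gaussianPDFReal]
  simp only [abs_neg, abs_of_pos hs, smul_eq_mul, sqrt_mul_gaussianPDFReal_sub_sqrt_mul hv]

lemma exp_mul_mul_gaussianPDFReal (a μ : ℝ) (v : ℝ≥0) (x : ℝ) :
    exp (a * x) * gaussianPDFReal μ v x =
      exp (a * μ + a ^ 2 * v / 2) * gaussianPDFReal (μ + a * v) v x := by
  rcases eq_or_ne v 0 with rfl | hv
  · simp
  have hv' : (v : ℝ) ≠ 0 := by exact_mod_cast hv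
  simp only [gaussianPDFReal]
  rw [mul_left_comm, mul_left_comm (exp _), ← exp_add, ← exp_add]
  congr 2
  field_simp
  ring

lemma integrable_exp_mul_mul_gaussianPDFReal (a μ : ℝ) (v : ℝ≥0) :
    Integrable (fun x ↦ exp (a * x) * gaussianPDFReal μ v x) := by
  simp_rw [exp_mul_mul_gaussianPDFReal]
  exact (integrable_gaussianPDFReal _ _).const_mul _

lemma setIntegral_Ioi_exp_mul_mul_gaussianPDFReal {v : ℝ≥0} (hv : v ≠ 0) (a μ k : ℝ) :
    ∫ x in Ioi k, exp (a * x) * gaussianPDFReal μ v x =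
      exp (a * μ + a ^ 2 * v / 2) * stdNormalCdf ((μ + a * v - k) / √v) := by
  simp_rw [exp_mul_mul_gaussianPDFReal, integral_const_mul, setIntegral_Ioi_gaussianPDFReal hv]

noncomputable def blackScholesD₁ (S K T σ rd rf : ℝ) : ℝ :=
  log (S / K) / (σ * √T) + (1 + (rd - rf - σ ^ 2 / 2) / σ ^ 2) * (σ * √T)

noncomputable def blackScholesCall (S K T σ rd rf : ℝ) : ℝ :=
  S * exp (-rf * T) * stdNormalCdf (blackScholesD₁ S K T σ rd rf) -
    K * exp (-rd * T) * stdNormalCdf (blackScholesD₁ S K T σ rd rf - σ * √T)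

lemma call_payoff_mul_exp_mul_gaussianPDFReal (S K σ θ c m : ℝ) (v : ℝ≥0) (x : ℝ) :
    (S * exp (σ * x) - K) * (exp (θ * x - c) * gaussianPDFReal m v x) =
      S * exp (-c) * (exp ((θ + σ) * x) * gaussianPDFReal m v x) -
        K * exp (-c) * (exp (θ * x) * gaussianPDFReal m v x) := by
  rw [sub_eq_add_neg (θ * x), add_mul θ, exp_add, exp_add]
  ring

lemma integrable_call_payoff_mul_exp_mul_gaussianPDFReal (S K σ θ c m : ℝ) (v : ℝ≥0) :
    Integrable (fun x ↦ (S * exp (σ * x) - K) * (exp (θ * x - c) * gaussianPDFReal m v x)) := by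
  simp_rw [call_payoff_mul_exp_mul_gaussianPDFReal]
  exact ((integrable_exp_mul_mul_gaussianPDFReal _ m v).const_mul _).sub
    ((integrable_exp_mul_mul_gaussianPDFReal _ m v).const_mul _)

lemma exp_neg_mul_setIntegral_Ioi_call_eq_blackScholesCall {S K σ rd rf θ : ℝ}
    (hS : 0 < S) (hK : 0 < K) (hσ : 0 < σ) (hθ : θ = (rd - rf - σ ^ 2 / 2) / σ)
    {v : ℝ≥0} (hv : v ≠ 0) (m : ℝ) :
    exp (-rd * v) * ∫ x in Ioi (log (K / S) / σ),
        (S * exp (σ * x) - K) * (exp (θ * x - θ ^ 2 * v / 2) * gaussianPDFReal m v x) =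
      exp (θ * m) * blackScholesCall (S * exp (σ * m)) K v σ rd rf := by
  have hint (a : ℝ) := (integrable_exp_mul_mul_gaussianPDFReal a m v).integrableOn
    (s := Ioi (log (K / S) / σ))
  simp_rw [call_payoff_mul_exp_mul_gaussianPDFReal]
  rw [integral_sub ((hint _).const_mul _) ((hint _).const_mul _), integral_const_mul,
    integral_const_mul, setIntegral_Ioi_exp_mul_mul_gaussianPDFReal hv,
    setIntegral_Ioi_exp_mul_mul_gaussianPDFReal hv]
  obtain ⟨s, hs, hsv⟩ : ∃ s, 0 < s ∧ √(v : ℝ) = s := ⟨_, by positivity, rfl⟩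
  have hvs : (v : ℝ) = s ^ 2 := by rw [← hsv, sq_sqrt (NNReal.coe_nonneg v)]
  have hd₁ : blackScholesD₁ (S * exp (σ * m)) K v σ rd rf =
      (m + (θ + σ) * v - log (K / S) / σ) / √v := by
    rw [blackScholesD₁, log_div (by positivity) hK.ne', log_mul hS.ne' (exp_pos _).ne', log_exp,
      log_div hK.ne' hS.ne', hsv, hvs, hθ]
    field_simp
    ring
  have hd₂ : blackScholesD₁ (S * exp (σ * m)) K v σ rd rf - σ * √v =
      (m + θ * v - log (K / S) / σ) / √v := by
    rw [hd₁, hsv, hvs]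
    field_simp
    ring
  rw [blackScholesCall, hd₂, hd₁]
  have he₁ : exp (-rd * v) * exp (-(θ ^ 2 * v / 2)) *
        exp ((θ + σ) * m + (θ + σ) ^ 2 * v / 2) = exp (θ * m) * exp (σ * m) * exp (-rf * v) := by
    simp only [← exp_add]
    congr 1
    rw [hθ]
    field_simp
    ring
  have he₂ : exp (-rd * v) * exp (-(θ ^ 2 * v / 2)) * exp (θ * m + θ ^ 2 * v / 2) =
      exp (θ * m) * exp (-rd * v) := by
    simp only [← exp_add]
    ring_nf
  linear_combination
    (S * stdNormalCdf ((m + (θ + σ) * v - log (K / S) / σ) / √v)) * he₁ -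
      (K * stdNormalCdf ((m + θ * v - log (K / S) / σ) / √v)) * he₂

noncomputable def driftedBMMinDensity (θ T x y : ℝ) : ℝ :=
  -exp (θ * x - θ ^ 2 * T / 2) * (2 * (2 * y - x) / (T * √(2 * π * T))) *
    exp (-(2 * y - x) ^ 2 / (2 * T))

lemma hasDerivAt_exp_mul_gaussianPDFReal_two_mul (θ x : ℝ) (v : ℝ≥0) (y : ℝ) :
    HasDerivAt (fun y ↦ exp (θ * x - θ ^ 2 * v / 2) * gaussianPDFReal (2 * y) v x)
      (driftedBMMinDensity θ v x y) y := by
  have hlin : HasDerivAt (fun y : ℝ ↦ x - 2 * y) (-2) y := by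
    simpa using ((hasDerivAt_id' y).const_mul 2).const_sub x
  refine ((((hlin.fun_pow 2).fun_neg.div_const (2 * (v : ℝ))).exp.const_mul
    (√(2 * π * v))⁻¹).const_mul (exp (θ * x - θ ^ 2 * v / 2))).congr_deriv ?_
  rw [driftedBMMinDensity, show (2 * y - x) ^ 2 = (x - 2 * y) ^ 2 by ring]
  ring

lemma integral_Ioc_driftedBMMinDensity (θ x : ℝ) (v : ℝ≥0) {b : ℝ} (hb : b ≤ min 0 x) :
    ∫ y in Ioc b (min 0 x), driftedBMMinDensity θ v x y =
      exp (θ * x - θ ^ 2 * v / 2) * (gaussianPDFReal 0 v x - gaussianPDFReal (2 * b) v x) := by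
  have hcont : Continuous (driftedBMMinDensity θ v x) := by
    unfold driftedBMMinDensity; fun_prop
  rw [← intervalIntegral.integral_of_le hb, intervalIntegral.integral_eq_sub_of_hasDerivAt
      (fun y _ ↦ hasDerivAt_exp_mul_gaussianPDFReal_two_mul θ x v y)
      (hcont.intervalIntegrable _ _), ← mul_sub]
  have hreflect : gaussianPDFReal (2 * min 0 x) v x = gaussianPDFReal 0 v x := by
    rcases le_total 0 x with hx | hx
    · rw [min_eq_left hx, mul_zero]
    · simp only [gaussianPDFReal, min_eq_right hx]; ring_nf
  rw [hreflect]

lemma max_sub_zero_eq_indicator_Ioi {S K σ : ℝ} (hS : 0 < S) (hK : 0 < K) (hσ : 0 < σ)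
    (x : ℝ) :
    max (S * exp (σ * x) - K) 0 =
      (Ioi (log (K / S) / σ)).indicator (fun x ↦ S * exp (σ * x) - K) x := by
  have hiff : K < S * exp (σ * x) ↔ log (K / S) / σ < x := by
    rw [div_lt_iff₀ hσ, log_lt_iff_lt_exp (by positivity), div_lt_iff₀' hS, mul_comm x]
  by_cases hx : x ∈ Ioi (log (K / S) / σ)
  · rw [indicator_of_mem hx, max_eq_left (sub_nonneg.mpr (hiff.mpr hx).le)]
  · rw [indicator_of_notMem hx, max_eq_right (sub_nonpos.mpr (not_lt.mp (hiff.not.mpr hx)))]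

lemma max_sub_zero_mul_integral_Ioc_driftedBMMinDensity {S K σ b : ℝ} (hS : 0 < S) (hK : 0 < K)
    (hσ : 0 < σ) (hb : b < 0) (hbk : b < log (K / S) / σ) (θ : ℝ) (v : ℝ≥0) (x : ℝ) :
    max (S * exp (σ * x) - K) 0 * ∫ y in Ioc b (min 0 x), driftedBMMinDensity θ v x y =
      (Ioi (log (K / S) / σ)).indicator (fun x ↦ (S * exp (σ * x) - K) *
        (exp (θ * x - θ ^ 2 * v / 2) *
          (gaussianPDFReal 0 v x - gaussianPDFReal (2 * b) v x))) x := by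
  rw [max_sub_zero_eq_indicator_Ioi hS hK hσ]
  by_cases hx : x ∈ Ioi (log (K / S) / σ)
  · rw [indicator_of_mem hx, indicator_of_mem hx,
      integral_Ioc_driftedBMMinDensity θ x v (le_min hb.le (hbk.trans hx).le)]
  · rw [indicator_of_notMem hx, indicator_of_notMem hx, zero_mul]

lemma exp_mul_blackScholesCall_reflected {S K B σ rd rf θ α y₁ T : ℝ} (hS : 0 < S)
    (hB : 0 < B) (hσ : 0 < σ) (hθ : θ = (rd - rf - σ ^ 2 / 2) / σ)
    (hα : α = (rd - rf - σ ^ 2 / 2) / σ ^ 2)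
    (hy₁ : y₁ = log (B ^ 2 / (S * K)) / (σ * √T) + (1 + α) * (σ * √T)) :
    exp (θ * (2 * (1 / σ * log (B / S)))) *
        blackScholesCall (S * exp (σ * (2 * (1 / σ * log (B / S))))) K T σ rd rf =
      S * exp (-rf * T) * (B / S) ^ (2 * (α + 1)) * stdNormalCdf y₁ -
        K * exp (-rd * T) * (B / S) ^ (2 * α) * stdNormalCdf (y₁ - σ * √T) := by
  have hBS : 0 < B / S := div_pos hB hS
  have hspot : S * exp (σ * (2 * (1 / σ * log (B / S)))) = B ^ 2 / S := by
    rw [show σ * (2 * (1 / σ * log (B / S))) = log (B / S) + log (B / S) by field_simp; ring,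
      exp_add, exp_log hBS]
    field_simp
  have hweight : exp (θ * (2 * (1 / σ * log (B / S)))) = (B / S) ^ (2 * α) := by
    rw [rpow_def_of_pos hBS, hθ, hα]
    congr 1
    field_simp
  have hd₁ : blackScholesD₁ (B ^ 2 / S) K T σ rd rf = y₁ := by
    rw [blackScholesD₁, div_div, hy₁, hα]
  rw [hweight, hspot, blackScholesCall, hd₁, mul_add, mul_one, rpow_add hBS, rpow_two]
  field_simp

/-- Down-and-out call price via the joint density of drifted Brownian motion and its
running minimum: the discounted double integral of the payoff against the joint density
equals `𝒜 - 𝒞`. -/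
theorem down_and_out_call_price (S₀ K T σ rd rf B : ℝ)
    (hS : 0 < S₀) (hK : 0 < K) (hT : 0 < T) (hσ : 0 < σ)
    (hB0 : 0 < B) (hB : B < min S₀ K)
    (α x₁ y₁ : ℝ)
    (hα : α = (rd - rf - σ ^ 2 / 2) / σ ^ 2)
    (hx₁ : x₁ = Real.log (S₀ / K) / (σ * Real.sqrt T) + (1 + α) * (σ * Real.sqrt T))
    (hy₁ : y₁ = Real.log (B ^ 2 / (S₀ * K)) / (σ * Real.sqrt T) + (1 + α) * (σ * Real.sqrt T)) :
    Real.exp (-rd * T) *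
        (∫ x : ℝ, ∫ y in Set.Ioc ((1 / σ) * Real.log (B / S₀)) (min 0 x),
          max (S₀ * Real.exp (σ * x) - K) 0 *
            (-Real.exp (((rd - rf - σ ^ 2 / 2) / σ) * x -
                  ((rd - rf - σ ^ 2 / 2) / σ) ^ 2 * T / 2) *
              (2 * (2 * y - x) / (T * Real.sqrt (2 * Real.pi * T))) *
              Real.exp (-(2 * y - x) ^ 2 / (2 * T)))) =
      (S₀ * Real.exp (-rf * T) * stdNormalCdf x₁ -
          K * Real.exp (-rd * T) * stdNormalCdf (x₁ - σ * Real.sqrt T)) -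
        (S₀ * Real.exp (-rf * T) * (B / S₀) ^ (2 * (α + 1)) * stdNormalCdf y₁ -
          K * Real.exp (-rd * T) * (B / S₀) ^ (2 * α) * stdNormalCdf (y₁ - σ * Real.sqrt T)) := by
  obtain ⟨v, rfl⟩ : ∃ v : ℝ≥0, (v : ℝ) = T := ⟨⟨T, hT.le⟩, rfl⟩
  have hv : v ≠ 0 := (NNReal.coe_pos.mp hT).ne'
  set θ := (rd - rf - σ ^ 2 / 2) / σ with hθ
  set b := 1 / σ * log (B / S₀) with hb_def
  have hb : b < 0 := mul_neg_of_pos_of_neg (by positivity)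
    (log_neg (by positivity) ((div_lt_one hS).2 (hB.trans_le (min_le_left _ _))))
  have hbk : b < log (K / S₀) / σ := by
    rw [hb_def, one_div_mul_eq_div]
    gcongr
    exact hB.trans_le (min_le_right _ _)
  have hint (m : ℝ) := (integrable_call_payoff_mul_exp_mul_gaussianPDFReal S₀ K σ θ
    (θ ^ 2 * v / 2) m v).integrableOn (s := Ioi (log (K / S₀) / σ))
  calc _ = exp (-rd * v) * ∫ x, max (S₀ * exp (σ * x) - K) 0 *
        ∫ y in Ioc b (min 0 x), driftedBMMinDensity θ v x y := by
          simp_rw [← integral_const_mul]; rfl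
    _ = exp (-rd * v) * ∫ x in Ioi (log (K / S₀) / σ),
          ((S₀ * exp (σ * x) - K) * (exp (θ * x - θ ^ 2 * v / 2) * gaussianPDFReal 0 v x) -
            (S₀ * exp (σ * x) - K) *
              (exp (θ * x - θ ^ 2 * v / 2) * gaussianPDFReal (2 * b) v x)) := by
          simp_rw [max_sub_zero_mul_integral_Ioc_driftedBMMinDensity hS hK hσ hb hbk,
            integral_indicator measurableSet_Ioi, mul_sub]
    _ = exp (θ * 0) * blackScholesCall (S₀ * exp (σ * 0)) K v σ rd rf -
          exp (θ * (2 * b)) * blackScholesCall (S₀ * exp (σ * (2 * b))) K v σ rd rf := by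
          rw [integral_sub (hint _) (hint _), mul_sub,
            exp_neg_mul_setIntegral_Ioi_call_eq_blackScholesCall hS hK hσ hθ hv,
            exp_neg_mul_setIntegral_Ioi_call_eq_blackScholesCall hS hK hσ hθ hv]
    _ = _ := by
          rw [exp_mul_blackScholesCall_reflected hS hB0 hσ hθ hα hy₁, mul_zero, mul_zero,
            exp_zero, mul_one, one_mul, blackScholesCall, blackScholesD₁, ← hα, ← hx₁]
end

section
/- Delta of the barrier-pricing parameter 𝒜: fix K > 0, T > 0, σ > 0, r_d, r_f ∈ ℝ and φ ∈ {1, −1}. Then the function S ↦ 𝒜(S) = φ(S e^{-r_f T} N(φx₁(S)) − K e^{-r_d T} N(φ(x₁(S) − σ√T))), where x₁(S) = ln(S/K)/(σ√T) + (1+α)σ√T and α = (r_d − r_f − σ²/2)/σ², is differentiable at every S > 0 with derivative ∂𝒜/∂S = (φ/2) e^{-r_f T} (erf(φ(2 ln(S/K) + T(2r_d − 2r_f + σ²))/(2√2 σ√T)) + 1). -/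
/-- The error function `erf z = (2/√π) ∫_0^z e^{-t²} dt`. -/
noncomputable def erf (z : ℝ) : ℝ :=
  (2 / Real.sqrt Real.pi) * ∫ t in (0:ℝ)..z, Real.exp (-t ^ 2)

/-!
Differentiating `N(φ x₁(s))` and `N(φ (x₁(s) - σ√T))` produces the Gaussian-density terms
`S e^{-r_f T} n(x₁)` and `K e^{-r_d T} n(x₁ - σ√T)`, which are equal because
`x₁ σ√T - σ²T/2 = ln(S/K) + (r_d - r_f) T`. Hence they cancel and the delta is
`φ e^{-r_f T} N(φ x₁)`, which is the claimed expression once `N` is written through `erf`.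
-/

open Real MeasureTheory Set

lemma integrable_exp_neg_sq_div_two : Integrable (fun x : ℝ => exp (-x ^ 2 / 2)) := by
  convert integrable_exp_neg_mul_sq (b := (1 / 2 : ℝ)) (by norm_num) using 2 with x
  ring_nf

lemma integral_exp_neg_sq_div_two : ∫ x : ℝ, exp (-x ^ 2 / 2) = √(2 * π) := by
  convert integral_gaussian (1 / 2 : ℝ) using 2 with x <;> ring_nf

lemma integral_Iic_zero_exp_neg_sq_div_two :
    ∫ x in Iic (0 : ℝ), exp (-x ^ 2 / 2) = √(2 * π) / 2 := by
  have hsymm : ∫ x in Iic (0 : ℝ), exp (-x ^ 2 / 2) = ∫ x in Ioi (0 : ℝ), exp (-x ^ 2 / 2) := by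
    have := integral_comp_neg_Iic (0 : ℝ) (fun x => exp (-x ^ 2 / 2))
    simpa only [neg_zero, neg_sq] using this
  have hsplit := intervalIntegral.integral_Iic_add_Ioi (b := (0 : ℝ)) (μ := volume)
    integrable_exp_neg_sq_div_two.integrableOn integrable_exp_neg_sq_div_two.integrableOn
  rw [integral_exp_neg_sq_div_two] at hsplit
  linarith

lemma stdNormalCdf_zero : stdNormalCdf 0 = 1 / 2 := by
  rw [stdNormalCdf, integral_const_mul, integral_Iic_zero_exp_neg_sq_div_two]
  field_simp

lemma stdNormalCdf_sub_stdNormalCdf_zero (z : ℝ) :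
    stdNormalCdf z - stdNormalCdf 0 = ∫ x in (0 : ℝ)..z, 1 / √(2 * π) * exp (-x ^ 2 / 2) := by
  have hint := integrable_exp_neg_sq_div_two.const_mul (1 / √(2 * π))
  exact intervalIntegral.integral_Iic_sub_Iic hint.integrableOn hint.integrableOn

lemma hasDerivAt_stdNormalCdf (z : ℝ) :
    HasDerivAt stdNormalCdf (1 / √(2 * π) * exp (-z ^ 2 / 2)) z := by
  have hcont : Continuous fun x : ℝ => 1 / √(2 * π) * exp (-x ^ 2 / 2) := by fun_prop
  have hcdf : stdNormalCdf =
      fun u => (∫ x in (0 : ℝ)..u, 1 / √(2 * π) * exp (-x ^ 2 / 2)) + stdNormalCdf 0 := by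
    funext u
    rw [← stdNormalCdf_sub_stdNormalCdf_zero u, sub_add_cancel]
  rw [hcdf]
  exact ((hcont.integral_hasStrictDerivAt 0 z).hasDerivAt).add_const _

lemma stdNormalCdf_eq_erf (z : ℝ) : stdNormalCdf z = (erf (z / √2) + 1) / 2 := by
  have h2 : √2 ≠ 0 := by positivity
  have hsubst : ∫ x in (0 : ℝ)..z, exp (-x ^ 2 / 2) = √2 * ∫ t in (0 : ℝ)..z / √2, exp (-t ^ 2) := by
    have := intervalIntegral.integral_comp_div (a := 0) (b := z) (fun t => exp (-t ^ 2)) h2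
    rw [zero_div, smul_eq_mul] at this
    rw [← this]
    congr 1 with x
    rw [div_pow, sq_sqrt zero_le_two]
    ring_nf
  have hdiff : stdNormalCdf z - stdNormalCdf 0 = erf (z / √2) / 2 := by
    rw [stdNormalCdf_sub_stdNormalCdf_zero, intervalIntegral.integral_const_mul, hsubst, erf,
      sqrt_mul zero_le_two]
    field_simp
  rw [stdNormalCdf_zero] at hdiff
  linarith

theorem hasDerivAt_blackScholes_of_density_eq {d : ℝ → ℝ} {d' S a b K c φ : ℝ}
    (hd : HasDerivAt d d' S) (hφ : φ ^ 2 = 1)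
    (hbalance : S * a * exp (-d S ^ 2 / 2) = K * b * exp (-(d S - c) ^ 2 / 2)) :
    HasDerivAt (fun s => φ * (s * a * stdNormalCdf (φ * d s) -
        K * b * stdNormalCdf (φ * (d s - c))))
      (φ * a * stdNormalCdf (φ * d S)) S := by
  have h₁ := ((hasDerivAt_id S).mul_const a).mul
    ((hasDerivAt_stdNormalCdf (φ * d S)).comp S (hd.const_mul φ))
  have h₂ := ((hasDerivAt_stdNormalCdf (φ * (d S - c))).comp S
    ((hd.sub_const c).const_mul φ)).const_mul (K * b)
  refine ((h₁.sub h₂).const_mul φ).congr_deriv ?_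
  simp only [Function.comp_apply, id, mul_pow, hφ, one_mul]
  linear_combination φ ^ 2 * d' / √(2 * π) * hbalance

lemma mul_exp_neg_sq_div_two_eq {S K x v rd rf T : ℝ} (hS : 0 < S) (hK : 0 < K)
    (hx : x * v - v ^ 2 / 2 = log (S / K) + (rd - rf) * T) :
    S * exp (-rf * T) * exp (-x ^ 2 / 2) = K * exp (-rd * T) * exp (-(x - v) ^ 2 / 2) := by
  rw [← exp_log hS, ← exp_log hK, ← exp_add, ← exp_add, ← exp_add, ← exp_add, exp_eq_exp]
  rw [log_div hS.ne' hK.ne'] at hx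
  linear_combination -hx

/-- Delta of the barrier-pricing parameter `𝒜`. -/
theorem delta_A (K T σ rd rf φ : ℝ) (hK : 0 < K) (hT : 0 < T) (hσ : 0 < σ)
    (hφ : φ = 1 ∨ φ = -1) (S : ℝ) (hS : 0 < S) :
    HasDerivAt (fun s : ℝ =>
        φ * (s * Real.exp (-rf * T) *
            stdNormalCdf (φ * (Real.log (s / K) / (σ * Real.sqrt T) +
              (1 + (rd - rf - σ ^ 2 / 2) / σ ^ 2) * (σ * Real.sqrt T))) -
          K * Real.exp (-rd * T) *
            stdNormalCdf (φ * (Real.log (s / K) / (σ * Real.sqrt T) +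
              (1 + (rd - rf - σ ^ 2 / 2) / σ ^ 2) * (σ * Real.sqrt T) - σ * Real.sqrt T))))
      (φ / 2 * Real.exp (-rf * T) *
        (erf (φ * (2 * Real.log (S / K) + T * (2 * rd - 2 * rf + σ ^ 2)) /
            (2 * Real.sqrt 2 * σ * Real.sqrt T)) + 1)) S := by
  have hφ2 : φ ^ 2 = 1 := by rcases hφ with rfl | rfl <;> norm_num
  have hsqrtT_sq : √T ^ 2 = T := sq_sqrt hT.le
  set x : ℝ → ℝ := fun s =>
    log (s / K) / (σ * √T) + (1 + (rd - rf - σ ^ 2 / 2) / σ ^ 2) * (σ * √T) with hx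
  have hxdiff : DifferentiableAt ℝ x S := by
    have : S / K ≠ 0 := by positivity
    fun_prop (disch := assumption)
  have hexponent : x S * (σ * √T) - (σ * √T) ^ 2 / 2 = log (S / K) + (rd - rf) * T := by
    simp only [hx]
    field_simp
    rw [hsqrtT_sq]
    ring
  have hbalance := mul_exp_neg_sq_div_two_eq hS hK hexponent
  convert hasDerivAt_blackScholes_of_density_eq hxdiff.hasDerivAt hφ2 hbalance using 1
  have harg : φ * x S / √2 =
      φ * (2 * log (S / K) + T * (2 * rd - 2 * rf + σ ^ 2)) / (2 * √2 * σ * √T) := by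
    simp only [hx]
    field_simp
    rw [hsqrtT_sq]
    ring
  rw [stdNormalCdf_eq_erf, harg]
  ring
end
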